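/- arXiv:2502.06017 — 5 statements merged into one kernel-verified Lean document; each statement's English description precedes it below -/
import Mathlib

section
/- If S is a subgroup of the diagonal maximal torus T of SU(3) containing a non-singular element (i.e., an element whose three diagonal entries are pairwise distinct), then the normalizer of S in SU(3) is contained in the normalizer of T in SU(3). -/
open Matrix Complex

noncomputable section

noncomputable instance SUGroup {n : Type*} [Fintype n] [DecidableEq n] :
    Group ↥(Matrix.specialUnitaryGroup n ℂ) :=
  { (inferInstance : Monoid ↥(Matrix.specialUnitaryGroup n ℂ)) with
    inv := fun g => ⟨star g.val,
      Matrix.mem_specialUnitaryGroup_iff.mpr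
        ⟨Unitary.star_mem (Matrix.mem_specialUnitaryGroup_iff.mp g.prop).1, by
          rw [Matrix.star_eq_conjTranspose, Matrix.det_conjTranspose,
            (Matrix.mem_specialUnitaryGroup_iff.mp g.prop).2, star_one]⟩⟩
    inv_mul_cancel := fun g =>
      Subtype.ext (Matrix.mem_specialUnitaryGroup_iff.mp g.prop).1.1 }

abbrev SU3 := ↥(Matrix.specialUnitaryGroup (Fin 3) ℂ)

lemma SU3.coe_inv (g : SU3) :
    ((g⁻¹ : SU3) : Matrix (Fin 3) (Fin 3) ℂ) = star (g : Matrix (Fin 3) (Fin 3) ℂ) := rfl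

lemma isDiag_mul {A B : Matrix (Fin 3) (Fin 3) ℂ} (hA : A.IsDiag) (hB : B.IsDiag) :
    (A * B).IsDiag := by
  intro i j hij
  rw [Matrix.mul_apply]
  refine Finset.sum_eq_zero fun k _ => ?_
  rcases eq_or_ne i k with rfl | hik
  · rw [hB hij, mul_zero]
  · rw [hA hik, zero_mul]

/-- The diagonal maximal torus of `SU(3)`. -/
def diagTorus : Subgroup SU3 where
  carrier := {g | (g : Matrix (Fin 3) (Fin 3) ℂ).IsDiag}
  one_mem' := Matrix.isDiag_one
  mul_mem' := fun ha hb => isDiag_mul ha hb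
  inv_mem' := fun {g} hg => by
    show (star (g : Matrix (Fin 3) (Fin 3) ℂ)).IsDiag
    exact hg.conjTranspose

/-
A unitary `M` with `M A = D M`, for diagonal `A` and `D`, can have `M i j ≠ 0` only when
`A j j = D i i`. If the diagonal of `A` is injective, each row of `M` therefore has a single
nonzero entry, and two distinct rows cannot have it in the same column since they are
orthogonal. So `M` is a monomial matrix, and conjugation by a monomial matrix preserves diagonal
matrices. For `n ∈ N(S)` this applies to `A = g` and `D = n g n⁻¹ ∈ S ≤ T`.
-/

namespace Matrix

variable {n R : Type*} [Fintype n] [DecidableEq n]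

lemma eq_of_mul_diagonal_eq_diagonal_mul [CommRing R] [IsDomain R] {M : Matrix n n R}
    {a d : n → R} (h : M * diagonal a = diagonal d * M) {i j : n} (hij : M i j ≠ 0) :
    a j = d i := by
  have hij' := congr_fun (congr_fun h i) j
  rw [mul_diagonal, diagonal_mul, mul_comm (d i)] at hij'
  exact mul_left_cancel₀ hij hij'

lemma IsDiag.mul_mul_star_of_mul_diagonal_eq [Field R] [StarRing R] {M : Matrix n n R}
    (hM : M ∈ unitaryGroup n R) {a d : n → R} (ha : Function.Injective a)
    (h : M * diagonal a = diagonal d * M) {B : Matrix n n R} (hB : B.IsDiag) :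
    (M * B * star M).IsDiag := by
  have row_support {i j j' : n} (hj : M i j ≠ 0) (hj' : M i j' ≠ 0) : j' = j :=
    ha ((eq_of_mul_diagonal_eq_diagonal_mul h hj').trans
      (eq_of_mul_diagonal_eq_diagonal_mul h hj).symm)
  intro i k hik
  rw [← hB.diagonal_diag, mul_apply]
  refine Finset.sum_eq_zero fun j _ => ?_
  rw [mul_diagonal, star_apply]
  by_contra hne
  have hij : M i j ≠ 0 := left_ne_zero_of_mul (left_ne_zero_of_mul hne)
  have hkj : M k j ≠ 0 := star_ne_zero.mp (right_ne_zero_of_mul hne)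
  have hrows : (M * star M) i k = M i j * star (M k j) := by
    rw [mul_apply]
    refine Finset.sum_eq_single j (fun j' _ hj' => ?_) (by simp)
    have hkj' : M k j' = 0 := by_contra fun hkj' => hj' (row_support hkj hkj')
    rw [star_apply, hkj', star_zero, mul_zero]
  rw [mem_unitaryGroup_iff.mp hM, one_apply_ne hik] at hrows
  exact mul_ne_zero hij (star_ne_zero.mpr hkj) hrows.symm

end Matrix

lemma mem_diagTorus {g : SU3} : g ∈ diagTorus ↔ (g : Matrix (Fin 3) (Fin 3) ℂ).IsDiag := Iff.rfl

lemma conj_mem_diagTorus {g n h : SU3} (hg : g ∈ diagTorus)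
    (hg_inj : Function.Injective (g : Matrix (Fin 3) (Fin 3) ℂ).diag)
    (hng : n * g * n⁻¹ ∈ diagTorus) (hh : h ∈ diagTorus) : n * h * n⁻¹ ∈ diagTorus := by
  have hcomm : (n : Matrix (Fin 3) (Fin 3) ℂ) * diagonal (g : Matrix (Fin 3) (Fin 3) ℂ).diag =
      diagonal (n * g * n⁻¹ : SU3).val.diag * n := by
    rw [mem_diagTorus.mp hg |>.diagonal_diag, mem_diagTorus.mp hng |>.diagonal_diag]
    exact congrArg Subtype.val (by group : n * g = n * g * n⁻¹ * n)
  exact (mem_diagTorus.mp hh).mul_mul_star_of_mul_diagonal_eq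
    (mem_specialUnitaryGroup_iff.mp n.prop).1 hg_inj hcomm

/-- If `S ≤ T` (the diagonal maximal torus of `SU(3)`) contains a
non-singular element (pairwise distinct diagonal entries), then
`N_{SU(3)}(S) ≤ N_{SU(3)}(T)`. -/
theorem normalizer_le_of_contains_nonsingular
    (S : Subgroup SU3) (hS : S ≤ diagTorus)
    (g : SU3) (hg : g ∈ S)
    (hns : ∀ i j : Fin 3, i ≠ j →
      (g : Matrix (Fin 3) (Fin 3) ℂ) i i ≠ (g : Matrix (Fin 3) (Fin 3) ℂ) j j) :
    Subgroup.normalizer (S : Set SU3) ≤ Subgroup.normalizer (diagTorus : Set SU3) := by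
  have hg_inj : Function.Injective (g : Matrix (Fin 3) (Fin 3) ℂ).diag :=
    fun i j hij => by_contra fun hne => hns i j hne hij
  have conj_mem {m : SU3} (hm : m ∈ Subgroup.normalizer (S : Set SU3)) {h : SU3}
      (hh : h ∈ diagTorus) : m * h * m⁻¹ ∈ diagTorus :=
    conj_mem_diagTorus (hS hg) hg_inj (hS ((hm g).mp hg)) hh
  intro n hn h
  refine ⟨conj_mem hn, fun hh => ?_⟩
  simpa [mul_assoc] using conj_mem (inv_mem hn) hh
end
end

section
/- The subgroup U(2) ⊂ SU(3), embedded as block matrices A ⊕ (det A)⁻¹ for A ∈ U(2), is self-normalizing in SU(3): its normalizer in SU(3) equals itself. -/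
open Matrix Complex

noncomputable section

/-- The embedded `U(2)` in `SU(3)`: matrices vanishing at positions
`(1,3),(2,3),(3,1),(3,2)` (0-indexed: `(0,2),(1,2),(2,0),(2,1)`). -/
def embU2 : Subgroup SU3 where
  carrier := {g | (g : Matrix (Fin 3) (Fin 3) ℂ) 0 2 = 0 ∧
    (g : Matrix (Fin 3) (Fin 3) ℂ) 1 2 = 0 ∧
    (g : Matrix (Fin 3) (Fin 3) ℂ) 2 0 = 0 ∧
    (g : Matrix (Fin 3) (Fin 3) ℂ) 2 1 = 0}
  one_mem' := by
    refine ⟨?_, ?_, ?_, ?_⟩ <;> simp [Matrix.one_apply]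
  mul_mem' := by
    intro a b ha hb
    obtain ⟨ha1, ha2, ha3, ha4⟩ := ha
    obtain ⟨hb1, hb2, hb3, hb4⟩ := hb
    refine ⟨?_, ?_, ?_, ?_⟩ <;>
      · show ((a : Matrix (Fin 3) (Fin 3) ℂ) * (b : Matrix (Fin 3) (Fin 3) ℂ)) _ _ = 0
        rw [Matrix.mul_apply, Fin.sum_univ_three]
        simp [ha1, ha2, ha3, ha4, hb1, hb2, hb3, hb4]
  inv_mem' := by
    intro g hg
    obtain ⟨h1, h2, h3, h4⟩ := hg
    refine ⟨?_, ?_, ?_, ?_⟩ <;>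
      · show (star (g : Matrix (Fin 3) (Fin 3) ℂ)) _ _ = 0
        simp only [Matrix.star_eq_conjTranspose, Matrix.conjTranspose_apply]
        simp [h1, h2, h3, h4]

/-! Conjugation by `g` is linear, so if `g` normalizes `embU2` it maps the linear span of
`embU2`, which contains every matrix unit `E_pq` with `p, q` in the same block of `{0, 1} ⊔ {2}`,
into the block-diagonal matrices. Since `g E_pq gᴴ = (g e_p)(g e_q)ᴴ`, every product
`g a p * conj (g b q)` with `(p, q)` inside and `(a, b)` outside the blocks vanishes, and as
`det g ≠ 0` this forces `g` itself to be block diagonal. -/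

local notation "Mat₃" => Matrix (Fin 3) (Fin 3) ℂ

def blockDiag21 : Submodule ℂ Mat₃ where
  carrier := {A | ∀ i j, (i = 2 ↔ j ≠ 2) → A i j = 0}
  add_mem' hA hB i j hij := by simp [hA i j hij, hB i j hij]
  zero_mem' _ _ _ := rfl
  smul_mem' c A hA i j hij := by simp [hA i j hij]

lemma mem_embU2_iff {g : SU3} : g ∈ embU2 ↔ (g : Mat₃) ∈ blockDiag21 := by
  refine ⟨fun ⟨h02, h12, h20, h21⟩ i j hij => ?_,
    fun h => ⟨h 0 2 (by decide), h 1 2 (by decide), h 2 0 (by decide), h 2 1 (by decide)⟩⟩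
  fin_cases i <;> fin_cases j <;> simp_all

lemma mul_single_one_mul_star_apply {n α : Type*} [Fintype n] [DecidableEq n] [Semiring α]
    [StarRing α] (M : Matrix n n α) (p q a b : n) :
    (M * single p q (1 : α) * star M) a b = M a p * star (M b q) := by
  simp [mul_apply, single_apply, ite_and, Finset.sum_ite_eq]

lemma mem_blockDiag21_of_conj_single_mem {M : Mat₃} (hdet : M.det ≠ 0)
    (h : ∀ p q : Fin 3, (p = 2 ↔ q = 2) → M * single p q (1 : ℂ) * star M ∈ blockDiag21) :
    M ∈ blockDiag21 := by
  have hM : ∀ p q a b, (p = 2 ↔ q = 2) → (a = 2 ↔ b ≠ 2) → M a p * star (M b q) = 0 :=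
    fun p q a b hpq hab => by rw [← mul_single_one_mul_star_apply]; exact h p q hpq a b hab
  -- a nonzero `M 2 k` with `k ≠ 2` would kill the upper left `2 × 2` block of `M`
  have row : ∀ k, k ≠ 2 → M 2 k = 0 := by
    intro k hk
    by_contra hne
    have upperLeft : ∀ d q, d ≠ 2 → q ≠ 2 → M d q = 0 := fun d q hd hq => star_eq_zero.mp
      ((mul_eq_zero.mp (hM k q 2 d (by simp [hk, hq]) (by simp [hd]))).resolve_left hne)
    apply hdet
    rw [det_fin_three, upperLeft 0 0 (by decide) (by decide), upperLeft 0 1 (by decide) (by decide),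
      upperLeft 1 0 (by decide) (by decide), upperLeft 1 1 (by decide) (by decide)]
    ring
  have h22 : M 2 2 ≠ 0 := by
    intro h0
    apply hdet
    rw [det_fin_three, row 0 (by decide), row 1 (by decide), h0]
    ring
  intro i j hij
  by_cases hi : i = 2
  · subst hi
    exact row j (hij.mp rfl)
  · obtain rfl : j = 2 := by simpa [hi] using hij
    exact (mul_eq_zero.mp (hM 2 2 i 2 Iff.rfl (by simp [hi]))).resolve_right
      (star_ne_zero.mpr h22)

lemma conj_mem_blockDiag21 {g : SU3} (hg : g ∈ Subgroup.normalizer (embU2 : Set SU3)) {X : Mat₃}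
    (hX : X ∈ Submodule.span ℂ (Subtype.val '' (embU2 : Set SU3))) :
    (g : Mat₃) * X * star (g : Mat₃) ∈ blockDiag21 := by
  have hspan : Submodule.span ℂ (Subtype.val '' (embU2 : Set SU3)) ≤ blockDiag21.comap
      (LinearMap.mulLeft ℂ (g : Mat₃) ∘ₗ LinearMap.mulRight ℂ (star (g : Mat₃))) := by
    rw [Submodule.span_le]
    rintro _ ⟨h, hh, rfl⟩
    simpa [mul_assoc, mem_embU2_iff, SU3.coe_inv] using (Subgroup.mem_normalizer_iff.mp hg h).mp hh
  simpa [mul_assoc] using hspan hX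

lemma mem_span_embU2 {A : Mat₃} (hU : A * star A = 1) (hdet : A.det = 1)
    (hA : A ∈ blockDiag21) : A ∈ Submodule.span ℂ (Subtype.val '' (embU2 : Set SU3)) :=
  Submodule.subset_span
    ⟨⟨A, mem_specialUnitaryGroup_iff.mpr ⟨mem_unitaryGroup_iff.mpr hU, hdet⟩⟩,
      mem_embU2_iff.mpr hA, rfl⟩

lemma single_mem_span_embU2 {p q : Fin 3} (hpq : p = 2 ↔ q = 2) :
    single p q (1 : ℂ) ∈ Submodule.span ℂ (Subtype.val '' (embU2 : Set SU3)) := by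
  set S := Submodule.span ℂ (Subtype.val '' (embU2 : Set SU3))
  have one : 1 ∈ S := Submodule.subset_span ⟨1, one_mem _, rfl⟩
  obtain ⟨s₁, s₂, u, w⟩ :
      !![1, 0, 0; 0, -1, 0; 0, 0, -1] ∈ S ∧ !![-1, 0, 0; 0, 1, 0; 0, 0, -1] ∈ S ∧
      !![0, 1, 0; -1, 0, 0; 0, 0, 1] ∈ S ∧ !![0, 1, 0; 1, 0, 0; 0, 0, -1] ∈ S := by
    refine ⟨?_, ?_, ?_, ?_⟩ <;>
      exact mem_span_embU2
        (by ext i j; fin_cases i <;> fin_cases j <;> simp [mul_apply, Fin.sum_univ_three])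
        (by simp [det_fin_three]) fun i j hij => by fin_cases i <;> fin_cases j <;> simp_all
  obtain ⟨rfl | rfl, rfl | rfl⟩ | ⟨rfl, rfl⟩ :
      ((p = 0 ∨ p = 1) ∧ (q = 0 ∨ q = 1)) ∨ (p = 2 ∧ q = 2) := by
    fin_cases p <;> fin_cases q <;> simp_all
  on_goal 1 => convert S.smul_mem (2⁻¹ : ℂ) (S.add_mem one s₁) using 1
  on_goal 2 => convert S.smul_mem (2⁻¹ : ℂ) (S.add_mem u w) using 1
  on_goal 3 => convert S.sub_mem (S.smul_mem (2⁻¹ : ℂ) (S.sub_mem w u))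
                 (S.smul_mem (2⁻¹ : ℂ) (S.add_mem s₁ s₂)) using 1
  on_goal 4 => convert S.smul_mem (2⁻¹ : ℂ) (S.add_mem one s₂) using 1
  on_goal 5 => convert S.smul_mem (2⁻¹ : ℂ) (S.neg_mem (S.add_mem s₁ s₂)) using 1
  all_goals
    ext i j
    fin_cases i <;> fin_cases j <;> norm_num [single_apply, Fin.ext_iff]

/-- The embedded `U(2) ⊂ SU(3)` is self-normalizing. -/
theorem embU2_self_normalizing : Subgroup.normalizer (embU2 : Set SU3) = embU2 := by
  refine le_antisymm (fun g hg => mem_embU2_iff.mpr ?_) Subgroup.le_normalizer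
  have hdet : (g : Mat₃).det ≠ 0 := by
    rw [(mem_specialUnitaryGroup_iff.mp g.prop).2]
    exact one_ne_zero
  exact mem_blockDiag21_of_conj_single_mem hdet fun p q hpq =>
    conj_mem_blockDiag21 hg (single_mem_span_embU2 hpq)
end
end

section
/- Let S be a subgroup of the singular circle {diag(z,z,z⁻²)} in SU(3) which is not central in SU(3). Then the normalizer of S in SU(3) is contained in the embedded U(2) (block matrices A ⊕ (det A)⁻¹). -/
open Matrix Complex

noncomputable section

/-- The circle subgroup `Z = {diag(z, z, z⁻²)}` of `SU(3)` (the centre of the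
embedded `U(2)`). -/
def circleZ : Subgroup SU3 where
  carrier := {g | ∃ z : ℂ,
    (g : Matrix (Fin 3) (Fin 3) ℂ) = Matrix.diagonal ![z, z, (z * z)⁻¹]}
  one_mem' := ⟨1, by
    have : ![(1 : ℂ), 1, (1 * 1 : ℂ)⁻¹] = fun _ => (1 : ℂ) := by
      funext i; fin_cases i <;> norm_num
    rw [this]
    show (1 : Matrix (Fin 3) (Fin 3) ℂ) = _
    rw [← Matrix.diagonal_one]⟩
  mul_mem' := by
    rintro a b ⟨z, hz⟩ ⟨w, hw⟩
    refine ⟨z * w, ?_⟩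
    show (a : Matrix (Fin 3) (Fin 3) ℂ) * (b : Matrix (Fin 3) (Fin 3) ℂ) = _
    rw [hz, hw, Matrix.diagonal_mul_diagonal]
    apply congrArg Matrix.diagonal
    funext i
    fin_cases i
    · simp
    · simp
    · show ![z, z, (z * z)⁻¹] 2 * ![w, w, (w * w)⁻¹] 2 = (z * w * (z * w))⁻¹
      show (z * z)⁻¹ * (w * w)⁻¹ = (z * w * (z * w))⁻¹
      rw [← mul_inv]
      congr 1
      ring
  inv_mem' := by
    rintro g ⟨z, hz⟩
    refine ⟨(starRingEnd ℂ) z, ?_⟩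
    show star (g : Matrix (Fin 3) (Fin 3) ℂ) = _
    rw [hz, Matrix.star_eq_conjTranspose, Matrix.diagonal_conjTranspose]
    apply congrArg Matrix.diagonal
    funext i
    fin_cases i
    · simp [Complex.star_def]
    · simp [Complex.star_def]
    · show star (![z, z, (z * z)⁻¹] 2) = ((starRingEnd ℂ) z * (starRingEnd ℂ) z)⁻¹
      show star ((z * z)⁻¹) = ((starRingEnd ℂ) z * (starRingEnd ℂ) z)⁻¹
      rw [star_inv₀, star_mul']
      rfl

/-!
Let `s = diag(z, z, z⁻²)` be a non-central element of `S`, so `z ≠ z⁻²`, and let `g` normalize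
`S`. Then `g s g⁻¹ = diag(w, w, w⁻²)` for some `w`, i.e. `g` intertwines the two diagonal matrices,
so `g i j = 0` whenever the `j`-th entry of the first differs from the `i`-th entry of the second.
If `w ≠ z` this kills the upper-left `2 × 2` block of `g`, forcing `det g = 0`; hence `w = z`,
and then `g` preserves the eigenspaces `span(e₁, e₂)` and `span(e₃)` of `s`, i.e. `g ∈ U(2)`.
-/

namespace Matrix

variable {n R : Type*} [Fintype n] [DecidableEq n] [CommRing R] [IsDomain R]

theorem apply_eq_zero_of_mul_diagonal_eq_diagonal_mul {A : Matrix n n R} {d e : n → R}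
    (h : A * diagonal d = diagonal e * A) {i j : n} (hij : d j ≠ e i) : A i j = 0 := by
  have hij' : A i j * d j = A i j * e i := by
    simpa [mul_diagonal, diagonal_mul, mul_comm] using congrFun (congrFun h i) j
  exact (mul_eq_mul_left_iff.mp hij').resolve_left hij

end Matrix

theorem SU3.mem_center_of_coe_eq_scalar {g : SU3} {c : ℂ}
    (hg : (g : Matrix (Fin 3) (Fin 3) ℂ) = scalar (Fin 3) c) : g ∈ Subgroup.center SU3 :=
  Subgroup.mem_center_iff.mpr fun h => Subtype.ext <| by
    change (h : Matrix (Fin 3) (Fin 3) ℂ) * g = (g : Matrix (Fin 3) (Fin 3) ℂ) * h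
    rw [hg]
    exact (scalar_commute c (fun _ => Commute.all _ _) _).symm.eq

theorem ne_of_circleZ_diagonal_notMem_center {g : SU3} {z : ℂ}
    (hg : (g : Matrix (Fin 3) (Fin 3) ℂ) = diagonal ![z, z, (z * z)⁻¹])
    (hgc : g ∉ Subgroup.center SU3) : z ≠ (z * z)⁻¹ := by
  intro hz
  refine hgc (SU3.mem_center_of_coe_eq_scalar (c := z) ?_)
  rw [hg, scalar_apply]
  congr 1
  ext i
  fin_cases i <;> simp [← hz]

theorem exists_mul_circleZ_diagonal_eq {S : Subgroup SU3} (hS : S ≤ circleZ)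
    {g s : SU3} (hg : g ∈ Subgroup.normalizer (S : Set SU3)) (hs : s ∈ S) {z : ℂ}
    (hz : (s : Matrix (Fin 3) (Fin 3) ℂ) = diagonal ![z, z, (z * z)⁻¹]) :
    ∃ w : ℂ, (g : Matrix (Fin 3) (Fin 3) ℂ) * diagonal ![z, z, (z * z)⁻¹] =
      diagonal ![w, w, (w * w)⁻¹] * g := by
  obtain ⟨w, hw⟩ := hS ((Subgroup.mem_normalizer_iff.mp hg s).mp hs)
  refine ⟨w, ?_⟩
  have hgu : star (g : Matrix (Fin 3) (Fin 3) ℂ) * g = 1 :=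
    (mem_specialUnitaryGroup_iff.mp g.prop).1.1
  change (g : Matrix (Fin 3) (Fin 3) ℂ) * s * star (g : Matrix (Fin 3) (Fin 3) ℂ) = _ at hw
  rw [← hz, ← hw, mul_assoc _ (star _), hgu, mul_one]

theorem eq_of_mul_circleZ_diagonal_eq {g : SU3} {z w : ℂ}
    (h : (g : Matrix (Fin 3) (Fin 3) ℂ) * diagonal ![z, z, (z * z)⁻¹] =
      diagonal ![w, w, (w * w)⁻¹] * g) : w = z := by
  by_contra hwz
  have hzw : z ≠ w := Ne.symm hwz
  have hdet : (g : Matrix (Fin 3) (Fin 3) ℂ).det = 1 := (mem_specialUnitaryGroup_iff.mp g.prop).2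
  have vanish (i j : Fin 3) (hi : i ≠ 2) (hj : j ≠ 2) : (g : Matrix (Fin 3) (Fin 3) ℂ) i j = 0 :=
    apply_eq_zero_of_mul_diagonal_eq_diagonal_mul h (by fin_cases i <;> fin_cases j <;> simp_all)
  simp [det_fin_three, vanish] at hdet

theorem mem_embU2_of_mul_circleZ_diagonal_comm {g : SU3} {z : ℂ} (hz : z ≠ (z * z)⁻¹)
    (h : (g : Matrix (Fin 3) (Fin 3) ℂ) * diagonal ![z, z, (z * z)⁻¹] =
      diagonal ![z, z, (z * z)⁻¹] * g) : g ∈ embU2 :=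
  ⟨apply_eq_zero_of_mul_diagonal_eq_diagonal_mul h (by simpa using hz.symm),
    apply_eq_zero_of_mul_diagonal_eq_diagonal_mul h (by simpa using hz.symm),
    apply_eq_zero_of_mul_diagonal_eq_diagonal_mul h (by simpa using hz),
    apply_eq_zero_of_mul_diagonal_eq_diagonal_mul h (by simpa using hz)⟩

/-- If `S` is a subgroup of the singular circle `{diag(z,z,z⁻²)}`
which is not central in `SU(3)`, then `N_{SU(3)}(S) ≤ U(2)` (embedded). -/
theorem normalizer_of_noncentral_subgroup_of_circleZ_le_embU2
    (S : Subgroup SU3) (hS : S ≤ circleZ) (hnc : ¬ S ≤ Subgroup.center SU3) :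
    Subgroup.normalizer (S : Set SU3) ≤ embU2 := by
  intro g hg
  obtain ⟨s, hsS, hsc⟩ := SetLike.not_le_iff_exists.mp hnc
  obtain ⟨z, hz⟩ := hS hsS
  obtain ⟨w, hgw⟩ := exists_mul_circleZ_diagonal_eq hS hg hsS hz
  obtain rfl := eq_of_mul_circleZ_diagonal_eq hgw
  exact mem_embU2_of_mul_circleZ_diagonal_comm (ne_of_circleZ_diagonal_notMem_center hz hsc) hgw
end
end

section
/- The normalizer of the diagonal maximal torus T in SU(3) is a split extension of T by the symmetric group Σ₃, where the splitting sends each transposition to the negative of the corresponding permutation matrix; in particular the Weyl group N_{SU(3)}(T)/T is isomorphic to Σ₃. -/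
open Matrix Complex

noncomputable section

/-!
The regular torus element `t = diag(1, i, -i)` has distinct eigenvalues, so for `n` in the
normalizer the relation `(n t n⁻¹) n = n t`, with `n t n⁻¹` diagonal, leaves at most one nonzero
entry in each row of `n`; as `det n ≠ 0`, `n` is monomial, i.e. a diagonal matrix times a
permutation matrix. Twisting permutation matrices by the sign makes them a homomorphism into
`SU(3)` (the determinant becomes `sign π ^ 4 = 1`). These matrices normalize the torus, since
conjugation only permutes diagonal entries, and meet it only in the identity, which gives both the
unique decomposition `n = d · s(π)` and the isomorphism `N(T)/T ≅ Σ₃`.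
-/

open Equiv

namespace Matrix

section

variable {n R : Type*} [Fintype n] [DecidableEq n]

theorem permMatrixHom_eq_of [NonAssocSemiring R] (π : Perm n) :
    (permMatrixHom π : Matrix n n R) = of fun i j => if i = π j then 1 else 0 := by
  ext i j
  simp [PEquiv.toMatrix_apply, Equiv.eq_symm_apply, eq_comm]

variable [CommRing R]

def signedPermMatrixHom : Perm n →* Matrix n n R where
  toFun π := (((Perm.sign π : ℤˣ) : ℤ) : R) • permMatrixHom π
  map_one' := by simp
  map_mul' π σ := by
    rw [map_mul, map_mul, smul_mul_smul_comm, Units.val_mul, Int.cast_mul]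

theorem signedPermMatrixHom_apply (π : Perm n) :
    (signedPermMatrixHom π : Matrix n n R) =
      (((Perm.sign π : ℤˣ) : ℤ) : R) • permMatrixHom π := rfl

theorem conjTranspose_signedPermMatrixHom [StarRing R] (π : Perm n) :
    (signedPermMatrixHom π : Matrix n n R)ᴴ = signedPermMatrixHom π⁻¹ := by
  simp [signedPermMatrixHom_apply, conjTranspose_smul, star_intCast]

theorem signedPermMatrixHom_mem_unitaryGroup [StarRing R] (π : Perm n) :
    signedPermMatrixHom π ∈ unitaryGroup n R := by
  rw [mem_unitaryGroup_iff', star_eq_conjTranspose, conjTranspose_signedPermMatrixHom,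
    ← map_mul, inv_mul_cancel, map_one]

theorem det_signedPermMatrixHom (π : Perm n) :
    (signedPermMatrixHom π : Matrix n n R).det =
      (((Perm.sign π : ℤˣ) : ℤ) : R) ^ (Fintype.card n + 1) := by
  simp [signedPermMatrixHom_apply, pow_succ]

theorem signedPermMatrixHom_mem_specialUnitaryGroup [StarRing R] (hn : Odd (Fintype.card n))
    (π : Perm n) :
    signedPermMatrixHom π ∈ specialUnitaryGroup n R := by
  rw [mem_specialUnitaryGroup_iff, det_signedPermMatrixHom]
  refine ⟨signedPermMatrixHom_mem_unitaryGroup π, ?_⟩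
  rcases Int.units_eq_one_or (Perm.sign π) with h | h
  · simp [h]
  · simp [h, hn.add_one.neg_one_pow]

theorem signedPermMatrixHom_mul_mul_inv (π : Perm n) (A : Matrix n n R) :
    signedPermMatrixHom π * A * signedPermMatrixHom π⁻¹ = A.submatrix ⇑π⁻¹ ⇑π⁻¹ := by
  have hsign : (((Perm.sign π : ℤˣ) : ℤ) : R) * (((Perm.sign π⁻¹ : ℤˣ) : ℤ) : R) = 1 := by
    rw [← Int.cast_mul, ← Units.val_mul, ← map_mul, mul_inv_cancel, map_one, Units.val_one,
      Int.cast_one]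
  rw [signedPermMatrixHom_apply, signedPermMatrixHom_apply, smul_mul_assoc, smul_mul_assoc,
    mul_smul_comm, smul_smul, hsign, one_smul, permMatrixHom_apply, permMatrixHom_apply,
    PEquiv.toMatrix_toPEquiv_mul, PEquiv.mul_toMatrix_toPEquiv]
  rfl

theorem isDiag_signedPermMatrixHom_iff [Nontrivial R] {π : Perm n} :
    (signedPermMatrixHom π : Matrix n n R).IsDiag ↔ π = 1 := by
  refine ⟨fun h => Equiv.ext fun j => by_contra fun hj => ?_, fun h => h ▸ by simp⟩
  have h0 := h hj
  rw [signedPermMatrixHom_apply, permMatrixHom_eq_of] at h0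
  rcases Int.units_eq_one_or (Perm.sign π) with hs | hs <;> simp [hs] at h0

theorem isDiag_mul_signedPermMatrixHom_inv {N : Matrix n n R} {π : Perm n}
    (hN : ∀ i j, i ≠ π j → N i j = 0) : (N * signedPermMatrixHom π⁻¹).IsDiag := by
  intro i j hij
  rw [signedPermMatrixHom_apply, mul_smul_comm, smul_apply, permMatrixHom_apply, inv_inv,
    PEquiv.mul_toMatrix_toPEquiv, submatrix_apply, id, hN i _ (by simpa using hij), smul_zero]

theorem exists_perm_support_of_diagonal_mul_eq_mul_diagonal [IsDomain R] {N : Matrix n n R}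
    {d e : n → R} (hd : Function.Injective d) (hN : N.det ≠ 0)
    (h : diagonal e * N = N * diagonal d) : ∃ π : Perm n, ∀ i j, i ≠ π j → N i j = 0 := by
  have eigen : ∀ i j, N i j ≠ 0 → d j = e i := fun i j hij =>
    mul_left_cancel₀ hij <| by
      simpa [diagonal_mul, mul_diagonal, mul_comm] using (congrFun (congrFun h i) j).symm
  have row : ∀ i j j', N i j ≠ 0 → N i j' ≠ 0 → j = j' := fun i j j' hj hj' =>
    hd ((eigen i j hj).trans (eigen i j' hj').symm)
  have col : ∀ j, ∃ i, N i j ≠ 0 := fun j => by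
    by_contra! hj
    exact hN (det_eq_zero_of_column_eq_zero j hj)
  choose f hf using col
  have f_inj : Function.Injective f := fun j j' hjj' => row (f j) j j' (hf j) (hjj' ▸ hf j')
  obtain ⟨π, rfl⟩ : ∃ π : Perm n, ⇑π = f := ⟨.ofBijective f f_inj.bijective_of_finite, rfl⟩
  refine ⟨π, fun i j hij => by_contra fun hN => hij ?_⟩
  have hi : N i (π.symm i) ≠ 0 := by simpa using hf (π.symm i)
  rw [row i j _ hN hi, π.apply_symm_apply]

end

theorem isDiag_submatrix_equiv_iff {m n α : Type*} [Zero α] {A : Matrix n n α} (e : m ≃ n) :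
    (A.submatrix e e).IsDiag ↔ A.IsDiag := by
  refine ⟨fun h => ?_, fun h => h.submatrix e.injective⟩
  simpa using h.submatrix e.symm.injective

end Matrix

def signedPermSU3 : Perm (Fin 3) →* SU3 where
  toFun π := ⟨signedPermMatrixHom π, signedPermMatrixHom_mem_specialUnitaryGroup (by decide) π⟩
  map_one' := Subtype.ext (map_one _)
  map_mul' π σ := Subtype.ext (map_mul _ π σ)

theorem coe_signedPermSU3 (π : Perm (Fin 3)) :
    (signedPermSU3 π : Matrix (Fin 3) (Fin 3) ℂ) = signedPermMatrixHom π := rfl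

theorem signedPermSU3_mem_normalizer (π : Perm (Fin 3)) :
    signedPermSU3 π ∈ Subgroup.normalizer (diagTorus : Set SU3) := by
  refine Subgroup.mem_normalizer_iff.2 fun g => ?_
  rw [← map_inv]
  change (g : Matrix (Fin 3) (Fin 3) ℂ).IsDiag ↔
    (signedPermSU3 π * (g : Matrix (Fin 3) (Fin 3) ℂ) * signedPermSU3 π⁻¹).IsDiag
  rw [coe_signedPermSU3, coe_signedPermSU3, signedPermMatrixHom_mul_mul_inv,
    isDiag_submatrix_equiv_iff]

theorem signedPermSU3_mem_diagTorus_iff {π : Perm (Fin 3)} :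
    signedPermSU3 π ∈ diagTorus ↔ π = 1 :=
  isDiag_signedPermMatrixHom_iff

def regularTorusEntries : Fin 3 → ℂ := ![1, I, -I]

theorem injective_regularTorusEntries : Function.Injective regularTorusEntries := by
  intro a b h
  fin_cases a <;> fin_cases b <;> norm_num [regularTorusEntries, Complex.ext_iff] at h <;> rfl

def regularTorusElement : SU3 :=
  ⟨diagonal regularTorusEntries, by
    rw [mem_specialUnitaryGroup_iff, mem_unitaryGroup_iff', star_eq_conjTranspose,
      diagonal_conjTranspose, diagonal_mul_diagonal, det_diagonal, Fin.prod_univ_three]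
    refine ⟨?_, by simp [regularTorusEntries]⟩
    rw [← diagonal_one]
    congr 1
    ext i
    fin_cases i <;> simp [regularTorusEntries]⟩

theorem exists_mul_signedPermSU3_inv_mem_diagTorus {n : SU3}
    (hn : n ∈ Subgroup.normalizer (diagTorus : Set SU3)) :
    ∃ π : Perm (Fin 3), n * (signedPermSU3 π)⁻¹ ∈ diagTorus := by
  have hconj : n * regularTorusElement * n⁻¹ ∈ diagTorus :=
    (Subgroup.mem_normalizer_iff.1 hn _).1 (isDiag_diagonal _)
  have hcomm : diagonal (diag ((n * regularTorusElement * n⁻¹ : SU3) :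
      Matrix (Fin 3) (Fin 3) ℂ)) * n = n * diagonal regularTorusEntries := by
    rw [IsDiag.diagonal_diag hconj]
    exact congrArg Subtype.val (inv_mul_cancel_right (n * regularTorusElement) n)
  have hdet : (n : Matrix (Fin 3) (Fin 3) ℂ).det ≠ 0 := by
    rw [(mem_specialUnitaryGroup_iff.1 n.2).2]
    exact one_ne_zero
  obtain ⟨π, hπ⟩ := exists_perm_support_of_diagonal_mul_eq_mul_diagonal
    injective_regularTorusEntries hdet hcomm
  refine ⟨π, ?_⟩
  rw [← map_inv]
  exact isDiag_mul_signedPermMatrixHom_inv hπ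

theorem injective_mul_signedPermSU3 :
    Function.Injective fun p : diagTorus × Perm (Fin 3) => (p.1 : SU3) * signedPermSU3 p.2 := by
  rintro ⟨d₁, π₁⟩ ⟨d₂, π₂⟩ (h : (d₁ : SU3) * signedPermSU3 π₁ = d₂ * signedPermSU3 π₂)
  have hquot : signedPermSU3 (π₂ * π₁⁻¹) = (d₂ : SU3)⁻¹ * d₁ := by
    rw [map_mul, map_inv]
    exact mul_inv_eq_of_eq_mul (by rw [mul_assoc, h, inv_mul_cancel_left])
  have hπ : π₂ * π₁⁻¹ = 1 := signedPermSU3_mem_diagTorus_iff.1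
    (hquot ▸ diagTorus.mul_mem (diagTorus.inv_mem d₂.2) d₁.2)
  obtain rfl : π₂ = π₁ := mul_inv_eq_one.1 hπ
  exact Prod.ext (Subtype.ext (mul_right_cancel h)) rfl

theorem existsUnique_eq_mul_signedPermSU3 {n : SU3}
    (hn : n ∈ Subgroup.normalizer (diagTorus : Set SU3)) :
    ∃! p : diagTorus × Perm (Fin 3), n = (p.1 : SU3) * signedPermSU3 p.2 := by
  obtain ⟨π, hπ⟩ := exists_mul_signedPermSU3_inv_mem_diagTorus hn
  refine ⟨(⟨_, hπ⟩, π), (inv_mul_cancel_right n _).symm,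
    fun p hp => injective_mul_signedPermSU3 (hp.symm.trans (inv_mul_cancel_right n _).symm)⟩

def weylGroupHom : Perm (Fin 3) →* Subgroup.normalizer (diagTorus : Set SU3) ⧸
    diagTorus.subgroupOf (Subgroup.normalizer (diagTorus : Set SU3)) :=
  (QuotientGroup.mk' _).comp (signedPermSU3.codRestrict _ signedPermSU3_mem_normalizer)

theorem weylGroupHom_bijective : Function.Bijective weylGroupHom := by
  refine ⟨(injective_iff_map_eq_one _).2 fun π hπ => ?_, fun q => ?_⟩
  · rw [weylGroupHom, MonoidHom.comp_apply, QuotientGroup.mk'_apply, QuotientGroup.eq_one_iff,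
      Subgroup.mem_subgroupOf] at hπ
    exact signedPermSU3_mem_diagTorus_iff.1 hπ
  · induction q using QuotientGroup.induction_on with | H n => ?_
    obtain ⟨π, hπ⟩ := exists_mul_signedPermSU3_inv_mem_diagTorus n.2
    refine ⟨π, QuotientGroup.eq_iff_div_mem.2 ?_⟩
    rw [Subgroup.mem_subgroupOf]
    simpa [div_eq_mul_inv] using diagTorus.inv_mem hπ

/-- The normalizer of the diagonal maximal torus `T` in `SU(3)` is a
split extension of `T` by `Σ₃`, the splitting sending a permutation `π` to
`sign(π)` times the permutation matrix (so each transposition goes to the negative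
of its permutation matrix); in particular the Weyl group `N(T)/T ≅ Σ₃`. -/
theorem normalizer_diagTorus_split_extension :
    ∃ s : Equiv.Perm (Fin 3) →* SU3,
      (∀ π : Equiv.Perm (Fin 3),
        ((s π : SU3) : Matrix (Fin 3) (Fin 3) ℂ) =
          (((Equiv.Perm.sign π : ℤˣ) : ℤ) : ℂ) •
            Matrix.of (fun i j : Fin 3 => if i = π j then (1 : ℂ) else 0)) ∧
      (∀ π : Equiv.Perm (Fin 3), s π ∈ (Subgroup.normalizer (diagTorus : Set SU3))) ∧
      (∀ n : SU3, n ∈ (Subgroup.normalizer (diagTorus : Set SU3)) →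
        ∃! p : diagTorus × Equiv.Perm (Fin 3), n = (p.1 : SU3) * s p.2) ∧
      Nonempty (((Subgroup.normalizer (diagTorus : Set SU3)) ⧸ diagTorus.subgroupOf (Subgroup.normalizer (diagTorus : Set SU3)))
        ≃* Equiv.Perm (Fin 3)) := by
  refine ⟨signedPermSU3, fun π => ?_, signedPermSU3_mem_normalizer,
    fun _ => existsUnique_eq_mul_signedPermSU3,
    ⟨(MulEquiv.ofBijective _ weylGroupHom_bijective).symm⟩⟩
  rw [coe_signedPermSU3, signedPermMatrixHom_apply, permMatrixHom_eq_of]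
end
end

section
/- Let S be a subgroup of the diagonal maximal torus T² of SU(3) consisting of singular elements with z₁ = z₂, and suppose S contains an element with z₃ ≠ z₁. Then every element of SU(3) normalizing S lies in the embedded U(2) (block matrices A ⊕ (det A)⁻¹). -/
open Matrix Complex

noncomputable section

/-
If `s = diag(a, a, b) ∈ S` with `a ≠ b` and `g` normalizes `S`, then `t = g s g⁻¹ ∈ S` is
`diag(c, c, d)` and `g s = t g` gives `g i j * (s j j - t i i) = 0` entrywise. If `c ≠ a`, the
upper-left `2 × 2` block of `g` vanishes, contradicting `det g = 1`; so `c = a`, and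
`det s = det t = 1` forces `d = b`. Hence `g` commutes with `s`, so it preserves the eigenspace
decomposition `ℂ³ = ℂ² ⊕ ℂ` of `s`.
-/

namespace Matrix

theorem IsDiag.apply_eq_zero_of_mul_eq_mul {n R : Type*} [Fintype n] [DecidableEq n]
    [CommRing R] [NoZeroDivisors R] {A D E : Matrix n n R} (hD : D.IsDiag) (hE : E.IsDiag)
    (h : A * D = E * A) {i j : n} (hij : D j j ≠ E i i) : A i j = 0 := by
  have hij' := congr_fun (congr_fun h i) j
  rw [← hD.diagonal_diag, ← hE.diagonal_diag, mul_diagonal, diagonal_mul] at hij'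
  have : A i j * (D j j - E i i) = 0 := by
    simp only [diag_apply] at hij'
    linear_combination hij'
  exact (mul_eq_zero.mp this).resolve_right (sub_ne_zero.mpr hij)

theorem IsDiag.det_fin_three {R : Type*} [CommRing R] {D : Matrix (Fin 3) (Fin 3) R}
    (hD : D.IsDiag) : D.det = D 0 0 * D 1 1 * D 2 2 := by
  rw [← hD.diagonal_diag, det_diagonal, Fin.prod_univ_three]
  simp only [diag_apply, diagonal_apply_eq]

theorem IsDiag.apply_zero_zero_eq_of_mul_eq_mul {R : Type*} [CommRing R] [IsDomain R]
    {A D E : Matrix (Fin 3) (Fin 3) R} (hA : A.det ≠ 0) (hD : D.IsDiag) (hE : E.IsDiag)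
    (hD01 : D 0 0 = D 1 1) (hE01 : E 0 0 = E 1 1) (h : A * D = E * A) : E 0 0 = D 0 0 := by
  by_contra hne
  have hne' : D 1 1 ≠ E 1 1 := by rw [← hD01, ← hE01]; exact Ne.symm hne
  have h00 : A 0 0 = 0 := hD.apply_eq_zero_of_mul_eq_mul hE h (Ne.symm hne)
  have h01 : A 0 1 = 0 := hD.apply_eq_zero_of_mul_eq_mul hE h (hE01 ▸ hne')
  have h10 : A 1 0 = 0 := hD.apply_eq_zero_of_mul_eq_mul hE h (hD01 ▸ hne')
  have h11 : A 1 1 = 0 := hD.apply_eq_zero_of_mul_eq_mul hE h hne'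
  apply hA
  rw [Matrix.det_fin_three, h00, h01, h10, h11]
  ring

end Matrix

theorem SU3.coe_mul_eq_conj_mul (g s : SU3) :
    (g * s : Matrix (Fin 3) (Fin 3) ℂ) =
      ((g * s * g⁻¹ : SU3) : Matrix (Fin 3) (Fin 3) ℂ) * g :=
  congrArg Subtype.val (by group : g * s = g * s * g⁻¹ * g)

theorem SU3.det_coe (g : SU3) : (g : Matrix (Fin 3) (Fin 3) ℂ).det = 1 :=
  (mem_specialUnitaryGroup_iff.mp g.prop).2

/-- If `S` is a subgroup of the diagonal maximal torus of `SU(3)`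
consisting of singular elements with `z₁ = z₂`, containing an element with
`z₃ ≠ z₁`, then every element of `SU(3)` normalizing `S` lies in the embedded `U(2)`. -/
theorem normalizer_le_embU2_of_singular_noncentral
    (S : Subgroup SU3) (hS : S ≤ diagTorus)
    (hsing : ∀ g ∈ S,
      (g : Matrix (Fin 3) (Fin 3) ℂ) 0 0 = (g : Matrix (Fin 3) (Fin 3) ℂ) 1 1)
    (hex : ∃ g ∈ S,
      (g : Matrix (Fin 3) (Fin 3) ℂ) 2 2 ≠ (g : Matrix (Fin 3) (Fin 3) ℂ) 0 0) :
    Subgroup.normalizer (S : Set SU3) ≤ embU2 := by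
  obtain ⟨s, hsS, hs⟩ := hex
  intro g hg
  set t : SU3 := g * s * g⁻¹
  have htS : t ∈ S := (Subgroup.mem_normalizer_iff.mp hg s).mp hsS
  have hsd : (s : Matrix (Fin 3) (Fin 3) ℂ).IsDiag := hS hsS
  have htd : (t : Matrix (Fin 3) (Fin 3) ℂ).IsDiag := hS htS
  have hgst := SU3.coe_mul_eq_conj_mul g s
  have h00 : (t : Matrix (Fin 3) (Fin 3) ℂ) 0 0 = (s : Matrix (Fin 3) (Fin 3) ℂ) 0 0 :=
    Matrix.IsDiag.apply_zero_zero_eq_of_mul_eq_mul (by rw [SU3.det_coe]; exact one_ne_zero)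
      hsd htd (hsing s hsS) (hsing t htS) hgst
  have h22 : (t : Matrix (Fin 3) (Fin 3) ℂ) 2 2 = (s : Matrix (Fin 3) (Fin 3) ℂ) 2 2 := by
    have hdet := SU3.det_coe s
    rw [hsd.det_fin_three, ← hsing s hsS] at hdet
    have hdet' := SU3.det_coe t
    rw [htd.det_fin_three, ← hsing t htS, h00, ← hdet] at hdet'
    exact mul_left_cancel₀ (left_ne_zero_of_mul_eq_one hdet) hdet'
  have h11 : (t : Matrix (Fin 3) (Fin 3) ℂ) 1 1 = (s : Matrix (Fin 3) (Fin 3) ℂ) 0 0 :=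
    hsing t htS ▸ h00
  refine ⟨?_, ?_, ?_, ?_⟩ <;> refine hsd.apply_eq_zero_of_mul_eq_mul htd hgst ?_
  · rwa [h00]
  · rwa [h11]
  · rw [h22]; exact hs.symm
  · rw [h22, ← hsing s hsS]; exact hs.symm
end
end
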